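/- Let ν be a probability measure on Cantor space with full support, and let A : 2^{<ℕ} → ℝ≥0 be increasing with A(∅) = 0 and A(σ0) = A(σ1) for all strings σ. Then there exists a probability measure μ on Cantor space with full support such that A is the predictable process of the Doob decomposition of the ν-submartingale L(σ) = −ln(μ([σ])/ν([σ])); equivalently, for all σ and ι: A(σι) − A(σ) = (L(σ0)·ν(σ0|σ) + L(σ1)·ν(σ1|σ)) − L(σ), with L(∅) = 0. -/

import Mathlib

open MeasureTheory Filter Topology

/-- Cantor space `2^ℕ`. -/
abbrev Cantor : Type := ℕ → Bool

/-- The basic clopen cylinder determined by a finite binary string. -/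
def cyl (σ : List Bool) : Set Cantor := {ω | ∀ i : Fin σ.length, ω i = σ.get i}

/-- The first `n` bits of `ω`, as a finite binary string. -/
def pre (ω : Cantor) (n : ℕ) : List Bool := (List.range n).map ω

/-- A measure on Cantor space has full support if every cylinder has positive measure. -/
def FullSupport (ν : Measure Cantor) : Prop := ∀ σ : List Bool, 0 < ν (cyl σ)

/-- Conditional probability `ν([τ] | [σ]) = ν([τ])/ν([σ])` (intended for `τ` extending `σ`). -/
noncomputable def cp (ν : Measure Cantor) (τ σ : List Bool) : ℝ :=
  (ν (cyl τ)).toReal / (ν (cyl σ)).toReal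

/-- The conditional measure `ν(· | [σ]) = ν(· ∩ [σ]) / ν([σ])`. -/
noncomputable def condMeas (ν : Measure Cantor) (σ : List Bool) : Measure Cantor :=
  (ν (cyl σ))⁻¹ • ν.restrict (cyl σ)

/-- The σ-algebra generated by the length-`k` cylinders. -/
def Falg (k : ℕ) : MeasurableSpace Cantor :=
  MeasurableSpace.generateFrom {A | ∃ σ : List Bool, σ.length = k ∧ A = cyl σ}

/-- Total variational distance between two measures restricted to a σ-algebra `G`. -/
noncomputable def tv (G : MeasurableSpace Cantor) (ρ τ : @Measure Cantor MeasurableSpace.pi) : ℝ :=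
  ⨆ A : {A : Set Cantor // MeasurableSet[G] A}, |(ρ A.1).toReal - (τ A.1).toReal|

/-- A dyadic `ν`-martingale: `M(σ) = M(σ0)ν(σ0|σ) + M(σ1)ν(σ1|σ)`. -/
def IsDyMart (ν : Measure Cantor) (M : List Bool → ℝ) : Prop :=
  ∀ σ : List Bool,
    M σ = M (σ ++ [false]) * cp ν (σ ++ [false]) σ + M (σ ++ [true]) * cp ν (σ ++ [true]) σ

/-- A dyadic `ν`-submartingale: `L(σ) ≤ L(σ0)ν(σ0|σ) + L(σ1)ν(σ1|σ)`. -/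
def IsDySubmart (ν : Measure Cantor) (L : List Bool → ℝ) : Prop :=
  ∀ σ : List Bool,
    L σ ≤ L (σ ++ [false]) * cp ν (σ ++ [false]) σ + L (σ ++ [true]) * cp ν (σ ++ [true]) σ

/-- A dyadic function is increasing if it is monotone along prefixes. -/
def IncrDy (A : List Bool → ℝ) : Prop := ∀ σ τ : List Bool, σ <+: τ → A σ ≤ A τ

/-- The dyadic `ν`-submartingale `L(σ) = −ln(μ([σ])/ν([σ]))`. -/
noncomputable def Lfun (μ ν : Measure Cantor) (σ : List Bool) : ℝ :=
  -Real.log ((μ (cyl σ)).toReal / (ν (cyl σ)).toReal)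

/-! We look for `μ` with `μ([σ]) = m(σ) := e^{-L(σ)} ν([σ])`. The required identities then say that
at every node, with `p = ν(σ0|σ)` and `c = A(σ0) - A(σ) ≥ 0`, the pair `(x, y) = (L(σ0), L(σ1))`
solves `p x + (1-p) y = L(σ) + c` and `p e^{-x} + (1-p) e^{-y} = e^{-L(σ)}`, the second equation
being additivity of `m` on cylinders. In the variables `u = e^{L(σ)-x}`, `w = e^{L(σ)-y}` the
system reads `p u + (1-p) w = 1`, `p log u + (1-p) log w = -c`; along that line the left side of
the second equation vanishes at `u = 1` and tends to `-∞` as `u → 0⁺`, so the intermediate value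
theorem solves it. Solving node by node defines `L`, and `μ` is the push-forward of Lebesgue
measure on `[0, 1)` under the expansion map that splits the interval of `σ` in the ratio
`m(σ0) : m(σ1)`. -/

theorem pre_succ (ω : Cantor) (n : ℕ) : pre ω (n + 1) = pre ω n ++ [ω n] := by
  simp [pre, List.range_succ]

theorem mem_cyl_iff {ω : Cantor} {σ : List Bool} : ω ∈ cyl σ ↔ pre ω σ.length = σ := by
  simp [cyl, List.ext_getElem_iff, pre, Fin.forall_iff]

theorem cyl_nil : cyl [] = Set.univ := by
  ext ω; simp [cyl]

theorem cyl_append_singleton (σ : List Bool) (ι : Bool) :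
    cyl (σ ++ [ι]) = cyl σ ∩ {ω | ω σ.length = ι} := by
  ext ω
  simp [mem_cyl_iff, pre_succ]

theorem cyl_eq_union (σ : List Bool) : cyl σ = cyl (σ ++ [false]) ∪ cyl (σ ++ [true]) := by
  ext ω; cases h : ω σ.length <;> simp [cyl_append_singleton, h]

theorem disjoint_cyl_false_true (σ : List Bool) :
    Disjoint (cyl (σ ++ [false])) (cyl (σ ++ [true])) := by
  simp only [cyl_append_singleton]
  exact Set.disjoint_left.2 fun ω h₀ h₁ => by simp_all

theorem measurableSet_cyl (σ : List Bool) : MeasurableSet (cyl σ) := by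
  have : cyl σ = ⋂ i : Fin σ.length, {ω : Cantor | ω i = σ.get i} := by
    ext ω; simp [cyl]
  rw [this]
  exact .iInter fun i => measurable_pi_apply _ (.singleton _)

namespace MassExpansion

variable (m : List Bool → ℝ)

/-- `[leftEnd m σ, leftEnd m σ + m σ)` is the set of points of `[0, 1)` whose expansion starts
with `σ`. -/
noncomputable def leftEnd (σ : List Bool) : ℝ :=
  σ.reverseRecOn 0 fun τ ι a => if ι then a + m (τ ++ [false]) else a

theorem leftEnd_nil : leftEnd m [] = 0 := by
  rw [leftEnd, List.reverseRecOn_nil]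

theorem leftEnd_append_singleton (σ : List Bool) (ι : Bool) :
    leftEnd m (σ ++ [ι]) = if ι then leftEnd m σ + m (σ ++ [false]) else leftEnd m σ := by
  rw [leftEnd, leftEnd, List.reverseRecOn_concat]

noncomputable def nextBit (x : ℝ) (σ : List Bool) : Bool :=
  decide (leftEnd m σ + m (σ ++ [false]) ≤ x)

theorem setOf_nextBit_eq_true (σ : List Bool) :
    {x | nextBit m x σ = true} = Set.Ici (leftEnd m σ + m (σ ++ [false])) := by
  ext x; simp [nextBit]

theorem setOf_nextBit_eq_false (σ : List Bool) :
    {x | nextBit m x σ = false} = Set.Iio (leftEnd m σ + m (σ ++ [false])) := by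
  ext x; simp [nextBit]

theorem measurable_nextBit (σ : List Bool) : Measurable fun x => nextBit m x σ :=
  measurable_to_bool <| by
    change MeasurableSet {x | nextBit m x σ = true}
    exact setOf_nextBit_eq_true m σ ▸ measurableSet_Ici

noncomputable def digits (x : ℝ) : ℕ → List Bool
  | 0 => []
  | n + 1 => digits x n ++ [nextBit m x (digits x n)]

noncomputable def expansion (x : ℝ) : Cantor := fun n => nextBit m x (digits m x n)

theorem digits_eq_pre_expansion (x : ℝ) (n : ℕ) : digits m x n = pre (expansion m x) n := by
  induction n with
  | zero => rfl
  | succ n ih => rw [digits, pre_succ, ← ih, expansion]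

theorem digits_succ_eq_append_singleton_iff {x : ℝ} {n : ℕ} {σ : List Bool} {ι : Bool} :
    digits m x (n + 1) = σ ++ [ι] ↔ digits m x n = σ ∧ nextBit m x σ = ι := by
  rw [digits]
  constructor
  · intro h
    obtain ⟨rfl, h⟩ := List.append_inj' h rfl
    simpa using h
  · rintro ⟨rfl, rfl⟩
    rfl

theorem preimage_expansion_cyl (σ : List Bool) :
    expansion m ⁻¹' cyl σ = {x | digits m x σ.length = σ} := by
  ext x; rw [Set.mem_preimage, mem_cyl_iff, Set.mem_ofPred_eq, digits_eq_pre_expansion]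

theorem measurableSet_setOf_digits_eq (n : ℕ) (σ : List Bool) :
    MeasurableSet {x | digits m x n = σ} := by
  induction n generalizing σ with
  | zero => exact .const ([] = σ)
  | succ n ih =>
    have : {x | digits m x (n + 1) = σ} =
        ⋃ τ, {x | digits m x n = τ} ∩ {x | τ ++ [nextBit m x τ] = σ} := by
      ext x; simp [digits]
    rw [this]
    refine .iUnion fun τ => (ih τ).inter ?_
    exact measurable_nextBit m τ (MeasurableSet.of_discrete (s := {b | τ ++ [b] = σ}))

theorem measurable_expansion : Measurable (expansion m) := by
  refine measurable_pi_lambda _ fun n => measurable_to_countable' fun b => ?_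
  have : (fun x => expansion m x n) ⁻¹' {b} = ⋃ τ, {x | digits m x (n + 1) = τ ++ [b]} := by
    ext x
    simp only [Set.mem_preimage, Set.mem_singleton_iff, Set.mem_iUnion, Set.mem_ofPred_eq,
      digits_succ_eq_append_singleton_iff, expansion, exists_eq_left']
  rw [this]
  exact .iUnion fun τ => measurableSet_setOf_digits_eq m _ _

variable {m}

theorem setOf_digits_eq_inter_Ico (h0 : ∀ σ, 0 ≤ m σ)
    (hadd : ∀ σ, m σ = m (σ ++ [false]) + m (σ ++ [true])) (h1 : m [] = 1) (σ : List Bool) :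
    {x | digits m x σ.length = σ} ∩ Set.Ico 0 1 = Set.Ico (leftEnd m σ) (leftEnd m σ + m σ) := by
  induction σ using List.reverseRecOn with
  | nil => simp [leftEnd_nil, h1, digits]
  | append_singleton τ ι ih =>
    have hsplit : {x | digits m x (τ ++ [ι]).length = τ ++ [ι]} =
        {x | digits m x τ.length = τ} ∩ {x | nextBit m x τ = ι} := by
      ext x; simp [digits_succ_eq_append_singleton_iff]
    rw [hsplit, Set.inter_right_comm, ih, hadd τ, leftEnd_append_singleton]
    cases ι
    · rw [setOf_nextBit_eq_false, Set.Ico_inter_Iio, min_eq_right (by linarith [h0 (τ ++ [true])])]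
      simp
    · rw [setOf_nextBit_eq_true, Set.Ico_inter_Ici, max_eq_right (by linarith [h0 (τ ++ [false])])]
      simp [add_assoc]

theorem exists_isProbabilityMeasure_cyl_eq (h0 : ∀ σ, 0 ≤ m σ)
    (hadd : ∀ σ, m σ = m (σ ++ [false]) + m (σ ++ [true])) (h1 : m [] = 1) :
    ∃ μ : Measure Cantor, IsProbabilityMeasure μ ∧ ∀ σ, μ (cyl σ) = ENNReal.ofReal (m σ) := by
  set μ := (volume.restrict (Set.Ico (0 : ℝ) 1)).map (expansion m)
  have hμ : ∀ σ, μ (cyl σ) = ENNReal.ofReal (m σ) := fun σ => by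
    rw [Measure.map_apply (measurable_expansion m) (measurableSet_cyl σ),
      Measure.restrict_apply' measurableSet_Ico, preimage_expansion_cyl,
      setOf_digits_eq_inter_Ico h0 hadd h1, Real.volume_Ico, add_sub_cancel_left]
  exact ⟨μ, ⟨by rw [← cyl_nil, hμ, h1, ENNReal.ofReal_one]⟩, hμ⟩

end MassExpansion

theorem toReal_measure_cyl_eq_add (ν : Measure Cantor) [IsFiniteMeasure ν] (σ : List Bool) :
    (ν (cyl σ)).toReal = (ν (cyl (σ ++ [false]))).toReal + (ν (cyl (σ ++ [true]))).toReal := by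
  rw [cyl_eq_union σ, measure_union (disjoint_cyl_false_true σ) (measurableSet_cyl _),
    ENNReal.toReal_add (measure_ne_top ν _) (measure_ne_top ν _)]

section FullSupport

variable {ν : Measure Cantor} [IsFiniteMeasure ν] (hν : FullSupport ν)
include hν

theorem FullSupport.toReal_pos (σ : List Bool) : 0 < (ν (cyl σ)).toReal :=
  ENNReal.toReal_pos (hν σ).ne' (measure_ne_top ν _)

theorem FullSupport.cp_pos (σ τ : List Bool) : 0 < cp ν τ σ :=
  div_pos (hν.toReal_pos τ) (hν.toReal_pos σ)

theorem FullSupport.cp_true_eq_one_sub (σ : List Bool) :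
    cp ν (σ ++ [true]) σ = 1 - cp ν (σ ++ [false]) σ := by
  rw [eq_sub_iff_add_eq, cp, cp, ← add_div, add_comm, ← toReal_measure_cyl_eq_add,
    div_self (hν.toReal_pos σ).ne']

theorem FullSupport.toReal_measure_cyl_eq_cp_mul (σ τ : List Bool) :
    (ν (cyl τ)).toReal = cp ν τ σ * (ν (cyl σ)).toReal :=
  (div_mul_cancel₀ _ (hν.toReal_pos σ).ne').symm

end FullSupport

theorem exists_pos_mean_eq_one_and_log_mean_eq {p c : ℝ} (hp0 : 0 < p) (hp1 : p < 1)
    (hc : 0 ≤ c) :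
    ∃ u w : ℝ, 0 < u ∧ 0 < w ∧ p * u + (1 - p) * w = 1 ∧
      p * Real.log u + (1 - p) * Real.log w = -c := by
  have hq : 0 < 1 - p := by linarith
  have hw : ∀ u ∈ Set.Ioc (0 : ℝ) 1, 0 < (1 - p * u) / (1 - p) := fun u hu =>
    div_pos (by nlinarith [hu.2]) hq
  set g : ℝ → ℝ := fun u => p * Real.log u + (1 - p) * Real.log ((1 - p * u) / (1 - p))
  have hg_cont : ContinuousOn g (Set.Ioc 0 1) := by
    exact ((Real.continuousOn_log.mono fun u hu => hu.1.ne').const_smul p).add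
      (continuousOn_const.mul (ContinuousOn.log (by fun_prop) fun u hu => (hw u hu).ne'))
  have hg_lim : Tendsto g (𝓝[>] 0) atBot := by
    refine (Real.tendsto_log_nhdsGT_zero.const_mul_atBot hp0).atBot_add
      (C := (1 - p) * Real.log ((1 - p * 0) / (1 - p))) ?_
    refine tendsto_nhdsWithin_of_tendsto_nhds ?_
    exact ((continuous_const.sub (continuous_const.mul continuous_id)).div_const _
      |>.continuousAt.log (by simp [hq.ne'])).const_mul _ |>.tendsto
  have hg1 : g 1 = 0 := by simp [g, div_self hq.ne']
  obtain ⟨u, hu, hgu⟩ := isPreconnected_Ioc.intermediate_value_Iic (a := 1) ⟨one_pos, le_rfl⟩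
    (le_principal_iff.2 (Ioc_mem_nhdsGT one_pos)) hg_cont hg_lim
    (show -c ∈ Set.Iic (g 1) by simpa [hg1] using hc)
  exact ⟨u, (1 - p * u) / (1 - p), hu.1, hw u hu, by field_simp; ring, hgu⟩

theorem exists_mean_eq_and_expNeg_mean_eq {p c : ℝ} (hp0 : 0 < p) (hp1 : p < 1) (hc : 0 ≤ c)
    (l : ℝ) :
    ∃ x y : ℝ, p * x + (1 - p) * y = l + c ∧
      p * Real.exp (-x) + (1 - p) * Real.exp (-y) = Real.exp (-l) := by
  obtain ⟨u, w, hu, hw, hmean, hlog⟩ := exists_pos_mean_eq_one_and_log_mean_eq hp0 hp1 hc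
  refine ⟨l - Real.log u, l - Real.log w, by linear_combination -hlog, ?_⟩
  have hexp : ∀ v > 0, Real.exp (-(l - Real.log v)) = Real.exp (-l) * v := fun v hv => by
    rw [neg_sub, sub_eq_add_neg, Real.exp_add, Real.exp_log hv, mul_comm]
  rw [hexp u hu, hexp w hw]
  linear_combination Real.exp (-l) * hmean

theorem exists_dyadic_mean_eq_and_expNeg_mean_eq (p c : List Bool → ℝ) (hp0 : ∀ σ, 0 < p σ)
    (hp1 : ∀ σ, p σ < 1) (hc : ∀ σ, 0 ≤ c σ) :
    ∃ L : List Bool → ℝ, L [] = 0 ∧ ∀ σ,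
      p σ * L (σ ++ [false]) + (1 - p σ) * L (σ ++ [true]) = L σ + c σ ∧
      p σ * Real.exp (-L (σ ++ [false])) + (1 - p σ) * Real.exp (-L (σ ++ [true])) =
        Real.exp (-L σ) := by
  choose x y hxy using fun σ => exists_mean_eq_and_expNeg_mean_eq (hp0 σ) (hp1 σ) (hc σ)
  refine ⟨fun σ => σ.reverseRecOn 0 fun τ ι l => if ι then y τ l else x τ l,
    List.reverseRecOn_nil _ _, fun σ => ?_⟩
  simpa only [List.reverseRecOn_concat, if_true, Bool.false_eq_true, if_false] using hxy σ _

theorem stmt15_general (ν : Measure Cantor) [IsProbabilityMeasure ν] (hν : FullSupport ν)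
    (A : List Bool → ℝ) (hinc : IncrDy A)
    (hsame : ∀ σ : List Bool, A (σ ++ [false]) = A (σ ++ [true])) :
    ∃ μ : Measure Cantor, IsProbabilityMeasure μ ∧ FullSupport μ ∧
      Lfun μ ν [] = 0 ∧
      (∀ (σ : List Bool) (ι : Bool),
        A (σ ++ [ι]) - A σ =
          (Lfun μ ν (σ ++ [false]) * cp ν (σ ++ [false]) σ +
            Lfun μ ν (σ ++ [true]) * cp ν (σ ++ [true]) σ) - Lfun μ ν σ) := by
  obtain ⟨L, hL0, hL⟩ := exists_dyadic_mean_eq_and_expNeg_mean_eq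
    (fun σ => cp ν (σ ++ [false]) σ) (fun σ => A (σ ++ [false]) - A σ) (hν.cp_pos · _)
    (fun σ => by linarith [hν.cp_pos σ (σ ++ [true]), hν.cp_true_eq_one_sub σ])
    (fun σ => sub_nonneg.2 (hinc _ _ ⟨[false], rfl⟩))
  set m : List Bool → ℝ := fun σ => Real.exp (-L σ) * (ν (cyl σ)).toReal
  have hm_pos : ∀ σ, 0 < m σ := fun σ => mul_pos (Real.exp_pos _) (hν.toReal_pos σ)
  obtain ⟨μ, hμ, hμm⟩ := MassExpansion.exists_isProbabilityMeasure_cyl_eq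
    (fun σ => (hm_pos σ).le)
    (fun σ => by
      simp only [m]
      rw [hν.toReal_measure_cyl_eq_cp_mul σ (σ ++ [false]),
        hν.toReal_measure_cyl_eq_cp_mul σ (σ ++ [true]), hν.cp_true_eq_one_sub σ]
      linear_combination -(ν (cyl σ)).toReal * (hL σ).2)
    (by simp [m, hL0, cyl_nil])
  have hLfun : ∀ σ, Lfun μ ν σ = L σ := fun σ => by
    rw [Lfun, hμm, ENNReal.toReal_ofReal (hm_pos σ).le, mul_div_assoc,
      div_self (hν.toReal_pos σ).ne', mul_one, Real.log_exp, neg_neg]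
  refine ⟨μ, hμ, fun σ => hμm σ ▸ ENNReal.ofReal_pos.2 (hm_pos σ), by rw [hLfun, hL0],
    fun σ ι => ?_⟩
  have hι : A (σ ++ [ι]) = A (σ ++ [false]) := by cases ι <;> simp [hsame]
  rw [hι, hLfun, hLfun, hLfun, hν.cp_true_eq_one_sub σ]
  linarith [(hL σ).1]

/-- Given an increasing non-negative dyadic function `A` with `A(∅)=0` and `A(σ0)=A(σ1)`,
there is a full-support probability measure `μ` such that `A` is the predictable process of
the Doob decomposition of the dyadic `ν`-submartingale `L(σ) = −ln(μ([σ])/ν([σ]))`: `L(∅)=0`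
and `A(σι) − A(σ) = (L(σ0)ν(σ0|σ) + L(σ1)ν(σ1|σ)) − L(σ)`. -/
theorem stmt15 (ν : Measure Cantor) [IsProbabilityMeasure ν] (hν : FullSupport ν)
    (A : List Bool → ℝ) (hA0 : A [] = 0) (hnn : ∀ σ, 0 ≤ A σ) (hinc : IncrDy A)
    (hsame : ∀ σ : List Bool, A (σ ++ [false]) = A (σ ++ [true])) :
    ∃ μ : Measure Cantor, IsProbabilityMeasure μ ∧ FullSupport μ ∧
      Lfun μ ν [] = 0 ∧
      (∀ (σ : List Bool) (ι : Bool),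
        A (σ ++ [ι]) - A σ =
          (Lfun μ ν (σ ++ [false]) * cp ν (σ ++ [false]) σ +
            Lfun μ ν (σ ++ [true]) * cp ν (σ ++ [true]) σ) - Lfun μ ν σ) :=
  stmt15_general ν hν A hinc hsame
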